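/- Let π be a probability measure on ℝ, n ≥ 1, A : ℝ → ℝ measurable, and suppose all the integrals below are finite and positive. Define g(t) = (∫_{(-∞,s)} exp(μt − nA(μ)) dπ(μ)) / (∫_ℝ exp(μt − nA(μ)) dπ(μ)). If π gives positive mass to both (−∞, s) and [s, ∞), then g is strictly decreasing in t. -/

import Mathlib

open MeasureTheory Real

/-!
Exponential tilting from `t₁` to `t₂ > t₁` multiplies the weight at `μ` by `exp (μ (t₂ - t₁))`,
which is `< exp (s (t₂ - t₁))` on `(-∞, s)` and `≥ exp (s (t₂ - t₁))` on `[s, ∞)`. So the mass of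
`(-∞, s)` grows by a factor strictly smaller than that of `[s, ∞)`, and its share of the total
mass strictly decreases.
-/

lemma div_add_lt_div_add_of_lt_mul_of_mul_le {a b c d k : ℝ} (ha : 0 < a) (hb : 0 < b)
    (hc : 0 < c) (hca : c < k * a) (hbd : k * b ≤ d) : c / (c + d) < a / (a + b) := by
  have hk : 0 < k := pos_of_mul_pos_left (hc.trans hca) ha.le
  have hd : 0 < d := (mul_pos hk hb).trans_le hbd
  rw [div_lt_div_iff₀ (by positivity) (by positivity)]
  nlinarith [mul_lt_mul_of_pos_right hca hb, mul_le_mul_of_nonneg_left hbd ha.le]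

section SetIntegral

variable {α : Type*} [MeasurableSpace α] {ν : Measure α} {S : Set α}

lemma setIntegral_exp_pos {f : α → ℝ} (hf : IntegrableOn (fun x => exp (f x)) S ν)
    (hS : ν S ≠ 0) : 0 < ∫ x in S, exp (f x) ∂ν :=
  haveI : NeZero (ν.restrict S) := ⟨by rwa [Ne, Measure.restrict_eq_zero]⟩
  integral_exp_pos hf

lemma setIntegral_lt_setIntegral_of_forall_mem_lt {f g : α → ℝ} (hS : MeasurableSet S)
    (hS0 : ν S ≠ 0) (hf : IntegrableOn f S ν) (hg : IntegrableOn g S ν)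
    (hlt : ∀ x ∈ S, f x < g x) : ∫ x in S, f x ∂ν < ∫ x in S, g x ∂ν := by
  rw [← sub_pos, ← integral_sub hg hf, setIntegral_pos_iff_support_of_nonneg_ae
    ((ae_restrict_iff' hS).2 (.of_forall fun x hx => (sub_pos.2 (hlt x hx)).le)) (hg.sub hf)]
  exact (pos_iff_ne_zero.2 hS0).trans_le
    (measure_mono fun x hx => ⟨(sub_pos.2 (hlt x hx)).ne', hx⟩)

end SetIntegral

section Tilting

variable {μ s t₁ t₂ c : ℝ}

lemma exp_mul_sub_lt_of_lt (hμ : μ < s) (ht : t₁ < t₂) :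
    exp (μ * t₂ - c) < exp (s * (t₂ - t₁)) * exp (μ * t₁ - c) := by
  rw [← exp_add, exp_lt_exp]
  nlinarith

lemma exp_mul_sub_le_of_le (hμ : s ≤ μ) (ht : t₁ ≤ t₂) :
    exp (s * (t₂ - t₁)) * exp (μ * t₁ - c) ≤ exp (μ * t₂ - c) := by
  rw [← exp_add, exp_le_exp]
  nlinarith

variable {ν : Measure ℝ} {A : ℝ → ℝ}

lemma setIntegral_Iio_exp_mul_sub_lt (ht : t₁ < t₂) (hν : ν (Set.Iio s) ≠ 0)
    (h₁ : Integrable (fun μ => exp (μ * t₁ - A μ)) ν)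
    (h₂ : Integrable (fun μ => exp (μ * t₂ - A μ)) ν) :
    ∫ μ in Set.Iio s, exp (μ * t₂ - A μ) ∂ν <
      exp (s * (t₂ - t₁)) * ∫ μ in Set.Iio s, exp (μ * t₁ - A μ) ∂ν := by
  rw [← integral_const_mul]
  exact setIntegral_lt_setIntegral_of_forall_mem_lt measurableSet_Iio hν h₂.integrableOn
    (h₁.const_mul _).integrableOn fun μ hμ => exp_mul_sub_lt_of_lt hμ ht

lemma setIntegral_Ici_exp_mul_sub_le (ht : t₁ ≤ t₂)
    (h₁ : Integrable (fun μ => exp (μ * t₁ - A μ)) ν)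
    (h₂ : Integrable (fun μ => exp (μ * t₂ - A μ)) ν) :
    exp (s * (t₂ - t₁)) * ∫ μ in Set.Ici s, exp (μ * t₁ - A μ) ∂ν ≤
      ∫ μ in Set.Ici s, exp (μ * t₂ - A μ) ∂ν := by
  rw [← integral_const_mul]
  exact setIntegral_mono_on (h₁.const_mul _).integrableOn h₂.integrableOn measurableSet_Ici
    fun μ hμ => exp_mul_sub_le_of_le hμ ht

end Tilting

theorem stmt_2_general (pr : Measure ℝ) (n : ℕ)
    (A : ℝ → ℝ) (s : ℝ)
    (hInt : ∀ t : ℝ, Integrable (fun μ => exp (μ * t - n * A μ)) pr)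
    (hmass1 : 0 < pr (Set.Iio s)) (hmass2 : 0 < pr (Set.Ici s)) :
    StrictAnti (fun t : ℝ =>
      (∫ μ in Set.Iio s, exp (μ * t - n * A μ) ∂pr) /
        (∫ μ, exp (μ * t - n * A μ) ∂pr)) := by
  intro t₁ t₂ ht
  have hsplit : ∀ t, ∫ μ, exp (μ * t - n * A μ) ∂pr =
      (∫ μ in Set.Iio s, exp (μ * t - n * A μ) ∂pr) +
        ∫ μ in Set.Ici s, exp (μ * t - n * A μ) ∂pr := fun t =>
    (intervalIntegral.integral_Iio_add_Ici (hInt t).integrableOn (hInt t).integrableOn).symm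
  simp only [hsplit]
  exact div_add_lt_div_add_of_lt_mul_of_mul_le
    (setIntegral_exp_pos (hInt t₁).integrableOn hmass1.ne')
    (setIntegral_exp_pos (hInt t₁).integrableOn hmass2.ne')
    (setIntegral_exp_pos (hInt t₂).integrableOn hmass1.ne')
    (setIntegral_Iio_exp_mul_sub_lt ht hmass1.ne' (hInt t₁) (hInt t₂))
    (setIntegral_Ici_exp_mul_sub_le ht.le (hInt t₁) (hInt t₂))

/-- With a prior `pr` on ℝ and the posterior-probability function
`g t = (∫_{(-∞,s)} exp(μt − nA(μ)) d pr) / (∫_ℝ exp(μt − nA(μ)) d pr)`,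
if all integrals involved are finite and positive and the prior charges both `(-∞, s)`
and `[s, ∞)`, then `g` is strictly decreasing. -/
theorem stmt_2 (pr : Measure ℝ) [IsProbabilityMeasure pr] (n : ℕ) (hn : 1 ≤ n)
    (A : ℝ → ℝ) (hA : Measurable A) (s : ℝ)
    (hInt : ∀ t : ℝ, Integrable (fun μ => exp (μ * t - n * A μ)) pr)
    (hpos : ∀ t : ℝ, 0 < ∫ μ in Set.Iio s, exp (μ * t - n * A μ) ∂pr)
    (hmass1 : 0 < pr (Set.Iio s)) (hmass2 : 0 < pr (Set.Ici s)) :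
    StrictAnti (fun t : ℝ =>
      (∫ μ in Set.Iio s, exp (μ * t - n * A μ) ∂pr) /
        (∫ μ, exp (μ * t - n * A μ) ∂pr)) :=
  stmt_2_general pr n A s hInt hmass1 hmass2
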